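/- arXiv:1512.07122 — 2 statements merged into one kernel-verified Lean document; each statement's English description precedes it below -/
import Mathlib

section
/- Let (X,μ) be a probability space and f, g ∈ L^∞(X,μ)⁺ with f ≺_w g (submajorization). Let c, d ≥ 0 be such that ∫_X max{f,c} dμ = ∫_X max{g,d} dμ. Then max{f,c} ≺ max{g,d}, i.e., the waterfilling of f at level c is majorized by the waterfilling of g at level d. -/
open MeasureTheory

/-- The decreasing rearrangement of `f` with respect to `μ`:
`f*(s) = sup { t ≥ 0 : μ{x : f(x) > t} > s }`. -/
noncomputable def decRe {X : Type*} [MeasurableSpace X] (μ : Measure X) (f : X → ℝ) (s : ℝ) : ℝ :=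
  sSup {t : ℝ | 0 ≤ t ∧ s < (μ {x | t < f x}).toReal}

/-- Submajorization `g ≺_w f` of functions on a measure space. -/
def SubMaj {X : Type*} [MeasurableSpace X] (μ : Measure X) (g f : X → ℝ) : Prop :=
  ∀ s ∈ Set.Icc (0 : ℝ) 1, ∫ t in (0 : ℝ)..s, decRe μ g t ≤ ∫ t in (0 : ℝ)..s, decRe μ f t

/-- Majorization `g ≺ f` of functions on a measure space. -/
def MajF {X : Type*} [MeasurableSpace X] (μ : Measure X) (g f : X → ℝ) : Prop :=
  SubMaj μ g f ∧ (∫ t in (0 : ℝ)..1, decRe μ g t) = ∫ t in (0 : ℝ)..1, decRe μ f t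

/-!
Waterfilling commutes with decreasing rearrangement, `(max f c)* = max f* c` on `[0, 1)`, and
rearrangement preserves integrals (layer cake), so it suffices to compare the decreasing functions
`F = f*` and `G = g*` on `[0, 1]`. If `F` drops below `c` at time `r ≤ s`, then
`∫₀ˢ max F c = ∫₀ʳ F + (s - r) c ≤ ∫₀ʳ G + (s - r) c ≤ ∫₀ˢ max G c`, which settles `[0, s]`
when `c ≤ max (G s) d`. Otherwise `max G d < c ≤ max F c` on `[s, 1]`, and the equality of the
total integrals turns this tail comparison into the one on `[0, s]`.
-/

open Set intervalIntegral

lemma AntitoneOn.max_const {α β : Type*} [Preorder α] [LinearOrder β] {F : α → β} {S : Set α}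
    (hF : AntitoneOn F S) (c : β) : AntitoneOn (fun t => max (F t) c) S :=
  fun _ ha _ hb hab => max_le_max_right c (hF ha hb hab)

section AntitoneIntegral

variable {F G : ℝ → ℝ} {a b c d r s : ℝ}

lemma AntitoneOn.intervalIntegrable_of_mem (hF : AntitoneOn F (Icc a b)) {x y : ℝ}
    (hx : x ∈ Icc a b) (hy : y ∈ Icc a b) : IntervalIntegrable F volume x y :=
  (hF.mono (uIcc_subset_Icc hx hy)).intervalIntegrable

lemma AntitoneOn.integral_add_mul_le_integral_max (hG : AntitoneOn G (Icc 0 s))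
    (hr : r ∈ Icc 0 s) : (∫ t in 0..r, G t) + (s - r) * c ≤ ∫ t in 0..s, max (G t) c := by
  have h0 : (0 : ℝ) ∈ Icc 0 s := left_mem_Icc.2 (hr.1.trans hr.2)
  have hs : s ∈ Icc 0 s := right_mem_Icc.2 (hr.1.trans hr.2)
  have hGc := hG.max_const c
  rw [← integral_add_adjacent_intervals (hGc.intervalIntegrable_of_mem h0 hr)
    (hGc.intervalIntegrable_of_mem hr hs), ← smul_eq_mul, ← intervalIntegral.integral_const]
  gcongr
  · exact integral_mono_on hr.1 (hG.intervalIntegrable_of_mem h0 hr)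
      (hGc.intervalIntegrable_of_mem h0 hr) fun t _ => le_max_left _ _
  · exact integral_mono_on hr.2 intervalIntegrable_const
      (hGc.intervalIntegrable_of_mem hr hs) fun t _ => le_max_right _ _

lemma AntitoneOn.exists_integral_max_eq (hs : 0 ≤ s) (hF : AntitoneOn F (Icc 0 s)) :
    ∃ r ∈ Icc 0 s, ∫ t in 0..s, max (F t) c = (∫ t in 0..r, F t) + (s - r) * c := by
  set A := insert 0 {t ∈ Icc 0 s | c < F t}
  have hA : BddAbove A := ⟨s, by rintro t (rfl | ht); exacts [hs, ht.1.2]⟩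
  set r := sSup A
  have hr : r ∈ Icc 0 s :=
    ⟨le_csSup hA (mem_insert _ _), csSup_le (insert_nonempty _ _) (by
      rintro t (rfl | ht); exacts [hs, ht.1.2])⟩
  have h0 : (0 : ℝ) ∈ Icc 0 s := left_mem_Icc.2 hs
  have hs' : s ∈ Icc 0 s := right_mem_Icc.2 hs
  refine ⟨r, hr, ?_⟩
  have hleft : ∫ t in 0..r, max (F t) c = ∫ t in 0..r, F t := by
    refine integral_congr_ae ?_
    filter_upwards [volume.ae_ne r] with t htr ht
    rw [uIoc_of_le hr.1] at ht
    obtain ⟨u, hu, htu⟩ := exists_lt_of_lt_csSup (insert_nonempty _ _) (ht.2.lt_of_ne htr)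
    rcases hu with rfl | hu
    · exact absurd ht.1 htu.not_gt
    · exact max_eq_left (hu.2.trans_le (hF ⟨ht.1.le, htu.le.trans hu.1.2⟩ hu.1 htu.le)).le
  have hright : ∫ t in r..s, max (F t) c = (s - r) * c := by
    rw [← smul_eq_mul, ← intervalIntegral.integral_const]
    refine integral_congr_ae (ae_of_all _ fun t ht => max_eq_right ?_)
    rw [uIoc_of_le hr.2] at ht
    exact not_lt.1 fun hct =>
      (le_csSup hA (mem_insert_of_mem _ ⟨⟨hr.1.trans ht.1.le, ht.2⟩, hct⟩)).not_gt ht.1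
  have hFc := hF.max_const c
  rw [← integral_add_adjacent_intervals (hFc.intervalIntegrable_of_mem h0 hr)
    (hFc.intervalIntegrable_of_mem hr hs'), hleft, hright]

lemma AntitoneOn.integral_max_le_integral_max (hs : 0 ≤ s) (hF : AntitoneOn F (Icc 0 s))
    (hG : AntitoneOn G (Icc 0 s)) (hFG : ∀ r ∈ Icc 0 s, ∫ t in 0..r, F t ≤ ∫ t in 0..r, G t) :
    ∫ t in 0..s, max (F t) c ≤ ∫ t in 0..s, max (G t) c := by
  obtain ⟨r, hr, hF_eq⟩ := hF.exists_integral_max_eq (c := c) hs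
  calc ∫ t in 0..s, max (F t) c = (∫ t in 0..r, F t) + (s - r) * c := hF_eq
    _ ≤ (∫ t in 0..r, G t) + (s - r) * c := by gcongr; exact hFG r hr
    _ ≤ ∫ t in 0..s, max (G t) c := hG.integral_add_mul_le_integral_max hr

theorem AntitoneOn.integral_max_le_of_forall_integral_le (hF : AntitoneOn F (Icc 0 1))
    (hG : AntitoneOn G (Icc 0 1)) (hFG : ∀ s ∈ Icc (0 : ℝ) 1, ∫ t in 0..s, F t ≤ ∫ t in 0..s, G t)
    (heq : ∫ t in 0..1, max (F t) c = ∫ t in 0..1, max (G t) d) (hs : s ∈ Icc 0 1) :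
    ∫ t in 0..s, max (F t) c ≤ ∫ t in 0..s, max (G t) d := by
  have h0 : (0 : ℝ) ∈ Icc 0 1 := left_mem_Icc.2 zero_le_one
  have h1 : (1 : ℝ) ∈ Icc 0 1 := right_mem_Icc.2 zero_le_one
  have hFc := hF.max_const c
  have hGd := hG.max_const d
  rcases le_or_gt c (max (G s) d) with hc | hc
  · have hsub : Icc 0 s ⊆ Icc 0 1 := Icc_subset_Icc_right hs.2
    calc ∫ t in 0..s, max (F t) c ≤ ∫ t in 0..s, max (G t) c :=
          (hF.mono hsub).integral_max_le_integral_max hs.1 (hG.mono hsub)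
            fun r hr => hFG r (hsub hr)
      _ ≤ ∫ t in 0..s, max (G t) d :=
          integral_mono_on hs.1 ((hG.max_const c).intervalIntegrable_of_mem h0 hs)
            (hGd.intervalIntegrable_of_mem h0 hs) fun t ht =>
            max_le (le_max_left _ _) (hc.trans (hGd (hsub ht) hs ht.2))
  · have htail : ∫ t in s..1, max (G t) d ≤ ∫ t in s..1, max (F t) c :=
      integral_mono_on hs.2 (hGd.intervalIntegrable_of_mem hs h1)
        (hFc.intervalIntegrable_of_mem hs h1) fun t ht =>
        ((hGd hs ⟨hs.1.trans ht.1, ht.2⟩ ht.1).trans hc.le).trans (le_max_right _ _)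
    have hFsplit := integral_add_adjacent_intervals (hFc.intervalIntegrable_of_mem h0 hs)
      (hFc.intervalIntegrable_of_mem hs h1)
    have hGsplit := integral_add_adjacent_intervals (hGd.intervalIntegrable_of_mem h0 hs)
      (hGd.intervalIntegrable_of_mem hs h1)
    linarith

end AntitoneIntegral

section DecreasingRearrangement

variable {X : Type*} [MeasurableSpace X] {μ : Measure X} {f : X → ℝ} {C c s t : ℝ}

lemma decRe_nonneg (s : ℝ) : 0 ≤ decRe μ f s :=
  Real.sSup_nonneg fun _ ht => ht.1

lemma bddAbove_decRe_set (hC : ∀ x, f x ≤ C) (hs : 0 ≤ s) :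
    BddAbove {t : ℝ | 0 ≤ t ∧ s < (μ {x | t < f x}).toReal} := by
  refine ⟨C, fun t ⟨_, hts⟩ => not_lt.1 fun hCt => hts.not_ge ?_⟩
  have : {x | t < f x} = ∅ :=
    eq_empty_of_forall_notMem fun x hx => (hC x).not_gt (hCt.trans hx)
  simpa [this] using hs

lemma decRe_antitoneOn (hC : ∀ x, f x ≤ C) : AntitoneOn (decRe μ f) (Ici 0) :=
  fun a ha _ _ hab => Real.sSup_le
    (fun _ ht => le_csSup (bddAbove_decRe_set hC ha) ⟨ht.1, hab.trans_lt ht.2⟩) (decRe_nonneg a)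

variable [IsFiniteMeasure μ]

lemma lt_decRe_iff (hC : ∀ x, f x ≤ C) (hs : 0 ≤ s) (ht : 0 ≤ t) :
    t < decRe μ f s ↔ s < (μ {x | t < f x}).toReal := by
  constructor
  · contrapose!
    refine fun hst => Real.sSup_le (fun u ⟨_, hsu⟩ => not_lt.1 fun htu => hsu.not_ge ?_) ht
    exact (ENNReal.toReal_mono (measure_ne_top _ _)
      (measure_mono fun x hx => htu.trans hx)).trans hst
  · -- right continuity of `t ↦ μ {x | t < f x}`
    have hU : {x | t < f x} = ⋃ n : ℕ, {x | t + 1 / (n + 1) < f x} := by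
      ext x
      simp only [mem_ofPred_eq, mem_iUnion]
      refine ⟨fun hx => ?_, fun ⟨n, hn⟩ => lt_of_le_of_lt (by simp; positivity) hn⟩
      obtain ⟨n, hn⟩ := exists_nat_one_div_lt (sub_pos.2 hx)
      exact ⟨n, by linarith⟩
    have hmono : Monotone fun n : ℕ => {x | t + 1 / (n + 1) < f x} :=
      fun m n hmn x hx =>
        lt_of_le_of_lt (show t + 1 / (n + 1 : ℝ) ≤ t + 1 / (m + 1) by gcongr) hx
    have hlt := fun (S : Set X) => ENNReal.ofReal_lt_iff_lt_toReal hs (measure_ne_top μ S)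
    rw [← hlt, hU, hmono.measure_iUnion, lt_iSup_iff]
    rintro ⟨n, hn⟩
    calc t < t + 1 / (n + 1) := by simp; positivity
      _ ≤ decRe μ f s := le_csSup (bddAbove_decRe_set hC hs) ⟨by positivity, (hlt _).1 hn⟩

variable [IsProbabilityMeasure μ]

lemma decRe_max_const (hC : ∀ x, f x ≤ C) (hc : 0 ≤ c) (hs : s ∈ Ico 0 1) :
    decRe μ (fun x => max (f x) c) s = max (decRe μ f s) c := by
  have hC' : ∀ x, max (f x) c ≤ max C c := fun x => max_le_max_right c (hC x)
  refine eq_of_forall_lt_iff fun t => ?_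
  rcases lt_or_ge t 0 with ht | ht
  · exact iff_of_true (ht.trans_le (decRe_nonneg s)) (ht.trans_le (hc.trans (le_max_right _ _)))
  rw [lt_decRe_iff hC' hs.1 ht, lt_max_iff, lt_decRe_iff hC hs.1 ht]
  rcases lt_or_ge t c with htc | htc
  · simp [htc, hs.2]
  · simp [htc.not_gt]

lemma integral_decRe_max_const (hC : ∀ x, f x ≤ C) (hc : 0 ≤ c) (hs : s ∈ Icc 0 1) :
    ∫ t in 0..s, decRe μ (fun x => max (f x) c) t = ∫ t in 0..s, max (decRe μ f t) c := by
  refine integral_congr_ae ?_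
  filter_upwards [volume.ae_ne 1] with t ht1 ht
  rw [uIoc_of_le hs.1] at ht
  exact decRe_max_const hC hc ⟨ht.1.le, (ht.2.trans hs.2).lt_of_ne ht1⟩

lemma volume_restrict_Ioo_lt_decRe (hC : ∀ x, f x ≤ C) (ht : 0 ≤ t) :
    volume.restrict (Ioo 0 1) {s | t < decRe μ f s} = μ {x | t < f x} := by
  have : {s | t < decRe μ f s} ∩ Ioo 0 1 = Ioo 0 (μ {x | t < f x}).toReal := by
    ext s
    simp only [mem_inter_iff, mem_ofPred_eq, mem_Ioo]
    constructor
    · rintro ⟨h, hs0, -⟩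
      exact ⟨hs0, (lt_decRe_iff hC hs0.le ht).1 h⟩
    · rintro ⟨hs0, hs⟩
      exact ⟨(lt_decRe_iff hC hs0.le ht).2 hs, hs0, hs.trans_le measureReal_le_one⟩
  rw [Measure.restrict_apply' measurableSet_Ioo, this, Real.volume_Ioo, sub_zero,
    ENNReal.ofReal_toReal (measure_ne_top _ _)]

lemma integral_decRe (hf : Measurable f) (hC : ∀ x, f x ≤ C) (hf0 : ∀ x, 0 ≤ f x) :
    ∫ s in 0..1, decRe μ f s = ∫ x, f x ∂μ := by
  have hint : IntegrableOn (decRe μ f) (Ioo 0 1) :=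
    (((decRe_antitoneOn hC).mono Icc_subset_Ici_self).integrableOn_isCompact
      isCompact_Icc).mono_set Ioo_subset_Icc_self
  have hfint : Integrable f μ := Integrable.of_bound hf.aestronglyMeasurable C
    (ae_of_all _ fun x => by rw [Real.norm_of_nonneg (hf0 x)]; exact hC x)
  rw [integral_of_le zero_le_one, integral_Ioc_eq_integral_Ioo,
    hint.integral_eq_integral_meas_lt (ae_of_all _ decRe_nonneg),
    hfint.integral_eq_integral_meas_lt (ae_of_all _ hf0)]
  refine setIntegral_congr_fun measurableSet_Ioi fun t ht => ?_
  simp only [Measure.real, volume_restrict_Ioo_lt_decRe hC (le_of_lt ht)]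

end DecreasingRearrangement

theorem waterfilling_majorization_general {X : Type*} [MeasurableSpace X] (μ : Measure X)
    [IsProbabilityMeasure μ] (f g : X → ℝ) (hf : Measurable f) (hg : Measurable g)
    (hfb : ∃ C : ℝ, ∀ x, f x ≤ C) (hgb : ∃ C : ℝ, ∀ x, g x ≤ C)
    (hsub : SubMaj μ f g) (c d : ℝ) (hc : 0 ≤ c) (hd : 0 ≤ d)
    (heq : (∫ x, max (f x) c ∂μ) = ∫ x, max (g x) d ∂μ) :
    MajF μ (fun x => max (f x) c) (fun x => max (g x) d) := by
  obtain ⟨Cf, hCf⟩ := hfb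
  obtain ⟨Cg, hCg⟩ := hgb
  have hFc := fun s (hs : s ∈ Icc (0 : ℝ) 1) => integral_decRe_max_const (μ := μ) hCf hc hs
  have hGd := fun s (hs : s ∈ Icc (0 : ℝ) 1) => integral_decRe_max_const (μ := μ) hCg hd hs
  have htotal : ∫ t in 0..1, decRe μ (fun x => max (f x) c) t
      = ∫ t in 0..1, decRe μ (fun x => max (g x) d) t := by
    rw [integral_decRe (hf.max measurable_const) (fun x => max_le_max_right c (hCf x))
      (fun x => hc.trans (le_max_right _ _)), integral_decRe (hg.max measurable_const)
      (fun x => max_le_max_right d (hCg x)) (fun x => hd.trans (le_max_right _ _)), heq]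
  have h1 : (1 : ℝ) ∈ Icc 0 1 := right_mem_Icc.2 zero_le_one
  refine ⟨fun s hs => ?_, htotal⟩
  rw [hFc s hs, hGd s hs]
  refine ((decRe_antitoneOn hCf).mono Icc_subset_Ici_self).integral_max_le_of_forall_integral_le
    ((decRe_antitoneOn hCg).mono Icc_subset_Ici_self) hsub ?_ hs
  rwa [← hFc 1 h1, ← hGd 1 h1]

/-- if `f ≺_w g` and the waterfillings have equal integrals, then
the waterfilling of `f` at level `c` is majorized by that of `g` at level `d`. -/
theorem waterfilling_majorization {X : Type*} [MeasurableSpace X] (μ : Measure X)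
    [IsProbabilityMeasure μ] (f g : X → ℝ) (hf : Measurable f) (hg : Measurable g)
    (hfb : ∃ C : ℝ, ∀ x, f x ≤ C) (hgb : ∃ C : ℝ, ∀ x, g x ≤ C)
    (hfpos : ∀ x, 0 ≤ f x) (hgpos : ∀ x, 0 ≤ g x)
    (hsub : SubMaj μ f g) (c d : ℝ) (hc : 0 ≤ c) (hd : 0 ≤ d)
    (heq : (∫ x, max (f x) c ∂μ) = ∫ x, max (g x) d ∂μ) :
    MajF μ (fun x => max (f x) c) (fun x => max (g x) d) :=
  waterfilling_majorization_general μ f g hf hg hfb hgb hsub c d hc hd heq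
end

section
/- Lidskii additive inequality (vector form): for x, y ∈ ℝ^n, the vector x + y is majorized by x↓ + y↓, i.e., x + y ≺ x↓ + y↓. -/
/-!
The sum of the `k` largest entries is subadditive: the `k` indices achieving `kMaxSum (x + y) k`
are admissible for `x` and for `y` separately. For antitone vectors the `k` largest entries are
the first `k`, so on antitone vectors `kMaxSum · k` is additive. Since `x↓` is a permutation of
`x`, it has the same `kMaxSum` and the same total, and the theorem follows from
`kMaxSum (x + y) ≤ kMaxSum x + kMaxSum y = kMaxSum (x↓ + y↓)`.
-/

/-- Sum of the `k` largest entries of a finite real vector. -/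
noncomputable def kMaxSum {n : ℕ} (a : Fin n → ℝ) (k : ℕ) : ℝ :=
  sSup ((fun S : Finset (Fin n) => ∑ i ∈ S, a i) '' {S : Finset (Fin n) | S.card = k})

/-- Vector majorization `a ≺ b` (possibly different lengths): partial sums of the
decreasing rearrangements compare, with equal total sums. -/
def Maj {n d : ℕ} (a : Fin n → ℝ) (b : Fin d → ℝ) : Prop :=
  (∀ k : ℕ, k ≤ min n d → kMaxSum a k ≤ kMaxSum b k) ∧ (∑ i, a i) = ∑ i, b i

/-- The decreasing rearrangement of a finite vector. -/
noncomputable def dsort {n : ℕ} (a : Fin n → ℝ) (i : Fin n) : ℝ :=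
  kMaxSum a (i + 1) - kMaxSum a i

open Finset

lemma Fin.val_le_of_strictMono {k n : ℕ} {f : Fin k → Fin n} (hf : StrictMono f) (i : Fin k) :
    (i : ℕ) ≤ f i := by
  have hsub : (Iio i).map ⟨f, hf.injective⟩ ⊆ Iio (f i) := by
    intro j hj
    obtain ⟨l, hl, rfl⟩ := mem_map.mp hj
    exact mem_Iio.mpr (hf (mem_Iio.mp hl))
  simpa using card_le_card hsub

section kMaxSum

variable {n : ℕ}

lemma sum_le_kMaxSum (a : Fin n → ℝ) {k : ℕ} {S : Finset (Fin n)} (hS : #S = k) :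
    ∑ i ∈ S, a i ≤ kMaxSum a k :=
  le_csSup (Set.toFinite _).bddAbove ⟨S, hS, rfl⟩

lemma exists_sum_eq_kMaxSum (a : Fin n → ℝ) {k : ℕ} (hk : k ≤ n) :
    ∃ S : Finset (Fin n), #S = k ∧ ∑ i ∈ S, a i = kMaxSum a k := by
  obtain ⟨S, -, hS⟩ := exists_subset_card_eq (s := (univ : Finset (Fin n))) (by simpa using hk)
  have hne : ((fun S : Finset (Fin n) => ∑ i ∈ S, a i) '' {S | #S = k}).Nonempty := ⟨_, S, hS, rfl⟩
  exact hne.csSup_mem (Set.toFinite _)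

lemma kMaxSum_add_le (a b : Fin n → ℝ) {k : ℕ} (hk : k ≤ n) :
    kMaxSum (a + b) k ≤ kMaxSum a k + kMaxSum b k := by
  obtain ⟨S, hS, hsum⟩ := exists_sum_eq_kMaxSum (a + b) hk
  rw [← hsum]
  simp only [Pi.add_apply, Finset.sum_add_distrib]
  exact add_le_add (sum_le_kMaxSum a hS) (sum_le_kMaxSum b hS)

lemma kMaxSum_comp_perm (a : Fin n → ℝ) (σ : Equiv.Perm (Fin n)) (k : ℕ) :
    kMaxSum (a ∘ σ) k = kMaxSum a k := by
  unfold kMaxSum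
  congr 1
  ext r
  simp only [Set.mem_image, Set.mem_ofPred_eq]
  constructor
  · rintro ⟨S, hS, rfl⟩
    exact ⟨S.map σ.toEmbedding, by simpa using hS, by simp⟩
  · rintro ⟨S, hS, rfl⟩
    exact ⟨S.map σ.symm.toEmbedding, by simpa using hS, by simp⟩

lemma kMaxSum_of_antitone {a : Fin n → ℝ} (ha : Antitone a) {k : ℕ} (hk : k ≤ n) :
    kMaxSum a k = ∑ i : Fin k, a (Fin.castLE hk i) := by
  refine le_antisymm ?_ ?_
  · obtain ⟨S, hS, hsum⟩ := exists_sum_eq_kMaxSum a hk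
    rw [← hsum, ← S.map_orderEmbOfFin_univ hS, sum_map]
    exact sum_le_sum fun i _ =>
      ha (Fin.le_def.mpr (Fin.val_le_of_strictMono (S.orderEmbOfFin hS).strictMono i))
  · simpa using sum_le_kMaxSum a (S := univ.map (Fin.castLEEmb hk)) (by simp)

lemma kMaxSum_add_of_antitone {a b : Fin n → ℝ} (ha : Antitone a) (hb : Antitone b) {k : ℕ}
    (hk : k ≤ n) : kMaxSum (a + b) k = kMaxSum a k + kMaxSum b k := by
  have hab : Antitone (a + b) := ha.add hb
  rw [kMaxSum_of_antitone hab hk, kMaxSum_of_antitone ha hk, kMaxSum_of_antitone hb hk,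
    ← Finset.sum_add_distrib]
  rfl

lemma dsort_of_antitone {a : Fin n → ℝ} (ha : Antitone a) : dsort a = a := by
  funext i
  rw [dsort, kMaxSum_of_antitone ha (Nat.succ_le_of_lt i.2),
    kMaxSum_of_antitone ha i.2.le, Fin.sum_univ_castSucc]
  simp only [Fin.castLE_castSucc, add_sub_cancel_left]
  rfl

lemma dsort_comp_perm (a : Fin n → ℝ) (σ : Equiv.Perm (Fin n)) : dsort (a ∘ σ) = dsort a := by
  funext i
  simp only [dsort, kMaxSum_comp_perm]

lemma exists_perm_dsort_eq_comp (a : Fin n → ℝ) :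
    ∃ σ : Equiv.Perm (Fin n), Antitone (a ∘ σ) ∧ dsort a = a ∘ σ := by
  have hσ : Antitone (a ∘ Tuple.sort (OrderDual.toDual ∘ a)) :=
    monotone_toDual_comp_iff.mp (Tuple.monotone_sort (OrderDual.toDual ∘ a))
  exact ⟨_, hσ, by rw [← dsort_comp_perm, dsort_of_antitone hσ]⟩

lemma antitone_dsort (a : Fin n → ℝ) : Antitone (dsort a) := by
  obtain ⟨σ, hσ, h⟩ := exists_perm_dsort_eq_comp a
  exact h ▸ hσ

lemma kMaxSum_dsort (a : Fin n → ℝ) (k : ℕ) : kMaxSum (dsort a) k = kMaxSum a k := by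
  obtain ⟨σ, -, h⟩ := exists_perm_dsort_eq_comp a
  rw [h, kMaxSum_comp_perm]

lemma sum_dsort (a : Fin n → ℝ) : ∑ i, dsort a i = ∑ i, a i := by
  obtain ⟨σ, -, h⟩ := exists_perm_dsort_eq_comp a
  rw [h]
  exact Equiv.sum_comp σ a

end kMaxSum

/-- Lidskii additive inequality: `x + y ≺ x↓ + y↓`. -/
theorem lidskii_additive {n : ℕ} (x y : Fin n → ℝ) :
    Maj (x + y) (dsort x + dsort y) := by
  refine ⟨fun k hk => ?_, ?_⟩
  · rw [min_self] at hk
    calc kMaxSum (x + y) k ≤ kMaxSum x k + kMaxSum y k := kMaxSum_add_le x y hk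
      _ = kMaxSum (dsort x) k + kMaxSum (dsort y) k := by rw [kMaxSum_dsort, kMaxSum_dsort]
      _ = kMaxSum (dsort x + dsort y) k :=
        (kMaxSum_add_of_antitone (antitone_dsort x) (antitone_dsort y) hk).symm
  · simp only [Pi.add_apply, Finset.sum_add_distrib, sum_dsort]
end
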